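/- Let 2 < p < 3 and suppose v ∈ H^1(ℝ^3), ‖v‖_{L^2}=1, is close in H^1 (after translation by τ) to the ground state Q, solves ∇_v F_{ρ,ω,p} = 0 with |ω - ω_0| and ρ > 0 sufficiently small, and satisfies the decomposition v(·-τ) = Q + r with r ∈ T_Q^⟂, ‖r‖_{H^1} small. Then P(v(·-τ)) = Q and π_{T_Q^⟂}(∇_{v(·-τ)} F_{ρ,ω,p}) = 0; hence, by local uniqueness, v(·-τ) coincides with the radial solution w(ρ,ω), so v is radial up to translation. -/

import Mathlib

/-! Translation invariance of `F_{ρ,ω,p}` makes `v(· - τ)` a critical point as well, in particular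
of the equation projected onto `T_Q^⟂`. Since `v(· - τ) - Q = r ⟂ T_Q`, the translate `σ = 0`
already satisfies the orthogonality condition characterising the projection, so
`P(v(· - τ)) = Q` by its uniqueness; local uniqueness for the projected problem then identifies
`v(· - τ)` with the radial branch `w`. -/

open MeasureTheory Real Filter Topology
noncomputable section

abbrev E3 : Type := EuclideanSpace ℝ (Fin 3)

/-- `u` belongs to the Sobolev space `H¹(ℝ³)` (formalized: `u` and `|∇u|` are in `L²`,
with `u` differentiable). -/
def H1 (u : E3 → ℝ) : Prop :=
  MemLp u 2 (volume : Measure E3) ∧ Differentiable ℝ u ∧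
    MemLp (fun x => ‖fderiv ℝ u x‖) 2 (volume : Measure E3)

/-- Coulomb energy `D(u) = ∫∫ |u(x)|²|u(y)|²/|x-y| dx dy`. -/
def coulomb (u : E3 → ℝ) : ℝ := ∫ x : E3, ∫ y : E3, (u x)^2 * (u y)^2 / ‖x - y‖

/-- `‖∇u‖_{L²}²`. -/
def gradSq (u : E3 → ℝ) : ℝ := ∫ x : E3, ‖fderiv ℝ u x‖^2

/-- `‖u‖_{L^p}^p`. -/
def lpPow (u : E3 → ℝ) (p : ℝ) : ℝ := ∫ x : E3, |u x| ^ p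

/-- `‖u‖_{L²}²`. -/
def l2sq (u : E3 → ℝ) : ℝ := ∫ x : E3, (u x)^2

/-- The `H¹` norm. -/
def h1norm (u : E3 → ℝ) : ℝ := Real.sqrt (gradSq u + l2sq u)

/-- A function is radially symmetric. -/
def IsRadial (u : E3 → ℝ) : Prop := ∀ x y : E3, ‖x‖ = ‖y‖ → u x = u y

/-- The Laplacian `Δu = ∑ ∂²u/∂xᵢ²`. -/
def lap (u : E3 → ℝ) (x : E3) : ℝ :=
  ∑ i : Fin 3, fderiv ℝ (fun y => fderiv ℝ u y (EuclideanSpace.single i 1)) x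
    (EuclideanSpace.single i 1)

/-- The partial derivative `∂_{x_i} Q`. -/
def dQ (Q : E3 → ℝ) (i : Fin 3) : E3 → ℝ := fun x => fderiv ℝ Q x (EuclideanSpace.single i 1)

/-- Pointwise inner product of gradients `∇u(x)·∇h(x)`. -/
def gradDot (u h : E3 → ℝ) (x : E3) : ℝ :=
  ∑ i : Fin 3, fderiv ℝ u x (EuclideanSpace.single i 1) * fderiv ℝ h x (EuclideanSpace.single i 1)

/-- The S-P-S energy `E_p`. -/
def Ep (p : ℝ) (u : E3 → ℝ) : ℝ := (1/2) * gradSq u + (1/4) * coulomb u - (1/p) * lpPow u p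

/-- The rescaled energy `E_{ρ,p}`. -/
def Erp (p ρ : ℝ) (u : E3 → ℝ) : ℝ := (1/2) * gradSq u + ρ * coulomb u - (1/p) * lpPow u p

/-- `K_{ρ,p}`: infimum of `E_{ρ,p}` over the unit `L²`-sphere in `H¹`. -/
def Kinf (p ρ : ℝ) : ℝ := sInf {E : ℝ | ∃ u, H1 u ∧ l2sq u = 1 ∧ Erp p ρ u = E}

/-- Translation `Q_τ = Q(·+τ)`. -/
def transl (Q : E3 → ℝ) (τ : E3) : E3 → ℝ := fun x => Q (x + τ)

/-- `R` is `L²`-orthogonal to the tangent space `T_{Q_τ} = span{∂_{x_i}Q(·+τ)}`. -/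
def perpTQ (Q : E3 → ℝ) (τ : E3) (R : E3 → ℝ) : Prop :=
  ∀ i : Fin 3, ∫ x : E3, R x * dQ Q i (x + τ) = 0

/-- The Gateaux derivative of `F_{ρ,ω,p}(u) = ½‖∇u‖² + ρD(u) - (1/p)‖u‖_p^p + (ω/2)‖u‖²`
at `u` in direction `h`; `∇_u F = 0` means `Fprime p ρ ω u h = 0` for all `h ∈ H¹`. -/
def Fprime (p ρ ω : ℝ) (u h : E3 → ℝ) : ℝ :=
  (∫ x : E3, gradDot u h x)
    + 4 * ρ * (∫ x : E3, ∫ y : E3, (u x)^2 * u y * h y / ‖x - y‖)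
    - (∫ x : E3, |u x| ^ (p - 2) * u x * h x)
    + ω * ∫ x : E3, u x * h x

/-- `h ⟂_{L²} T_Q` where `T_Q = span{∂_{x_i}Q}`. -/
def perpT0 (Q h : E3 → ℝ) : Prop := ∀ i : Fin 3, ∫ x : E3, h x * dQ Q i x = 0

theorem integral_comp_sub_right_eq {G : Type*} [NormedAddCommGroup G] [MeasurableSpace G]
    [MeasurableAdd G] (μ : Measure G) [μ.IsAddRightInvariant] (F : G → G → ℝ) (τ : G) :
    ∫ x, F (x - τ) x ∂μ = ∫ x, F x (x + τ) ∂μ := by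
  simpa using integral_sub_right_eq_self (μ := μ) (fun z => F z (z + τ)) τ

theorem H1.comp_add_right {u : E3 → ℝ} (hu : H1 u) (τ : E3) : H1 (fun x => u (x + τ)) := by
  obtain ⟨hL2, hdiff, hgrad⟩ := hu
  have hτ : MeasurePreserving (· + τ) (volume : Measure E3) volume :=
    measurePreserving_add_right volume τ
  refine ⟨hL2.comp_measurePreserving hτ, hdiff.comp (differentiable_id.add_const τ), ?_⟩
  simp only [fderiv_comp_add_right]
  exact hgrad.comp_measurePreserving hτ

theorem H1.add {u v : E3 → ℝ} (hu : H1 u) (hv : H1 v) : H1 (fun x => u x + v x) := by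
  obtain ⟨huL2, hudiff, hugrad⟩ := hu
  obtain ⟨hvL2, hvdiff, hvgrad⟩ := hv
  refine ⟨huL2.add hvL2, hudiff.add hvdiff, ?_⟩
  refine (hugrad.add hvgrad).mono (measurable_fderiv ℝ _).norm.aestronglyMeasurable ?_
  filter_upwards with x
  rw [fderiv_fun_add (hudiff x) (hvdiff x), norm_norm, Pi.add_apply,
    Real.norm_of_nonneg (add_nonneg (norm_nonneg _) (norm_nonneg _))]
  exact norm_add_le _ _

theorem Fprime_comp_sub_right (p ρ ω : ℝ) (u h : E3 → ℝ) (τ : E3) :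
    Fprime p ρ ω (fun x => u (x - τ)) h = Fprime p ρ ω u (fun x => h (x + τ)) := by
  have hgrad : ∫ x, gradDot (fun y => u (y - τ)) h x = ∫ x, gradDot u (fun y => h (y + τ)) x := by
    simp only [gradDot, fderiv_comp_sub, fderiv_comp_add_right]
    exact integral_comp_sub_right_eq volume
      (fun a b => ∑ i : Fin 3, fderiv ℝ u a (EuclideanSpace.single i 1) *
        fderiv ℝ h b (EuclideanSpace.single i 1)) τ
  have hcoulomb : ∫ x, ∫ y, (u (x - τ))^2 * u (y - τ) * h y / ‖x - y‖
      = ∫ x, ∫ y, (u x)^2 * u y * h (y + τ) / ‖x - y‖ :=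
    calc _ = ∫ x, ∫ y, (u (x - τ))^2 * u y * h (y + τ) / ‖x - (y + τ)‖ := by
          congr 1; funext x
          exact integral_comp_sub_right_eq volume
            (fun a b => (u (x - τ))^2 * u a * h b / ‖x - b‖) τ
      _ = ∫ x, ∫ y, (u x)^2 * u y * h (y + τ) / ‖x + τ - (y + τ)‖ :=
          integral_comp_sub_right_eq volume
            (fun a b => ∫ y, (u a)^2 * u y * h (y + τ) / ‖b - (y + τ)‖) τ
      _ = _ := by simp only [add_sub_add_right_eq_sub]
  have hpow : ∫ x, |u (x - τ)| ^ (p - 2) * u (x - τ) * h x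
      = ∫ x, |u x| ^ (p - 2) * u x * h (x + τ) :=
    integral_comp_sub_right_eq volume (fun a b => |u a| ^ (p - 2) * u a * h b) τ
  have hmass : ∫ x, u (x - τ) * h x = ∫ x, u x * h (x + τ) :=
    integral_comp_sub_right_eq volume (fun a b => u a * h b) τ
  rw [Fprime, Fprime, hgrad, hcoulomb, hpow, hmass]

theorem Fprime_comp_sub_right_eq_zero {p ρ ω : ℝ} {u : E3 → ℝ}
    (hcrit : ∀ h : E3 → ℝ, H1 h → Fprime p ρ ω u h = 0) (τ : E3) :
    ∀ h : E3 → ℝ, H1 h → Fprime p ρ ω (fun x => u (x - τ)) h = 0 := fun h hh => by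
  rw [Fprime_comp_sub_right]
  exact hcrit _ (hh.comp_add_right τ)

theorem perpTQ_zero_iff (Q R : E3 → ℝ) : perpTQ Q 0 R ↔ perpT0 Q R := by
  simp only [perpTQ, perpT0, add_zero]

theorem transl_zero (Q : E3 → ℝ) : transl Q 0 = Q := by
  funext x
  simp only [transl, add_zero]

theorem conclusion_radiality_general (p ω ρ : ℝ)
    (Q : E3 → ℝ) (hQ : H1 Q)
    (v : E3 → ℝ)
    (hcrit : ∀ h : E3 → ℝ, H1 h → Fprime p ρ ω v h = 0)
    (τ : E3) (r : E3 → ℝ) (hr : H1 r) (hperp : perpT0 Q r)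
    (hdec : (fun x => v (x - τ)) = fun x => Q x + r x)
    (ε0 ε4 : ℝ)
    (hsmall : h1norm r < min ε0 ε4)
    (P : (E3 → ℝ) → E3 → ℝ)
    (hPuniq : ∀ u : E3 → ℝ, H1 u → h1norm (fun x => u x - Q x) < ε0 →
      ∀ σ : E3, perpTQ Q σ (fun x => u x - transl Q σ x) → transl Q σ = P u)
    (w : E3 → ℝ) (hwH1 : H1 w) (hwrad : IsRadial w)
    (hwsmall : h1norm (fun x => w x - Q x) < ε4) (hwP : P w = Q)
    (hwcrit : ∀ h : E3 → ℝ, H1 h → perpT0 Q h → Fprime p ρ ω w h = 0)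
    (hUniq : ∀ u₁ u₂ : E3 → ℝ,
      (H1 u₁ ∧ h1norm (fun x => u₁ x - Q x) < ε4 ∧ P u₁ = Q ∧
        ∀ h : E3 → ℝ, H1 h → perpT0 Q h → Fprime p ρ ω u₁ h = 0) →
      (H1 u₂ ∧ h1norm (fun x => u₂ x - Q x) < ε4 ∧ P u₂ = Q ∧
        ∀ h : E3 → ℝ, H1 h → perpT0 Q h → Fprime p ρ ω u₂ h = 0) →
      u₁ = u₂) :
    P (fun x => v (x - τ)) = Q ∧
      (∀ h : E3 → ℝ, H1 h → perpT0 Q h →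
        Fprime p ρ ω (fun x => v (x - τ)) h = 0) ∧
      (fun x => v (x - τ)) = w ∧ IsRadial (fun x => v (x - τ)) := by
  have hsub : (fun x => v (x - τ) - Q x) = r := by
    funext x
    rw [congrFun hdec x, add_sub_cancel_left]
  have hH1 : H1 (fun x => v (x - τ)) := hdec ▸ hQ.add hr
  have hclose : h1norm (fun x => v (x - τ) - Q x) < min ε0 ε4 := hsub ▸ hsmall
  have hP : P (fun x => v (x - τ)) = Q := by
    have hperp₀ : perpTQ Q 0 (fun x => v (x - τ) - transl Q 0 x) := by
      rwa [transl_zero, hsub, perpTQ_zero_iff]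
    simpa only [transl_zero, eq_comm] using
      hPuniq _ hH1 (hclose.trans_le (min_le_left _ _)) 0 hperp₀
  have hcrit_perp : ∀ h : E3 → ℝ, H1 h → perpT0 Q h →
      Fprime p ρ ω (fun x => v (x - τ)) h = 0 :=
    fun h hh _ => Fprime_comp_sub_right_eq_zero hcrit τ h hh
  have hw : (fun x => v (x - τ)) = w :=
    hUniq _ w ⟨hH1, hclose.trans_le (min_le_right _ _), hP, hcrit_perp⟩
      ⟨hwH1, hwsmall, hwP, hwcrit⟩
  exact ⟨hP, hcrit_perp, hw, hw ▸ hwrad⟩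

/-- conclusion of the proof. If `v` (on the unit `L²` sphere) is a critical
point of `F_{ρ,ω,p}` close to `Q` after translation by `τ`, decomposed as
`v(·-τ) = Q + r` with `r ⟂ T_Q` small, then `P(v(·-τ)) = Q` and
`π_{T_Q^⟂}(∇_{v(·-τ)}F_{ρ,ω,p}) = 0`; hence by the local uniqueness property and the
radial branch `w(ρ,ω)`, `v(·-τ) = w(ρ,ω)` and `v` is radial up to translation. -/
theorem conclusion_radiality (p ω0 ω ρ : ℝ) (hp1 : 2 < p) (hp2 : p < 3)
    (Q : E3 → ℝ) (hQ : H1 Q) (hQrad : IsRadial Q) (hQpos : ∀ x, 0 < Q x)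
    (hQnorm : l2sq Q = 1)
    (hQeq : ∀ x : E3, -(lap Q x) + ω0 * Q x - Q x * |Q x| ^ (p - 2) = 0)
    (v : E3 → ℝ) (hv : H1 v) (hvnorm : l2sq v = 1)
    (hcrit : ∀ h : E3 → ℝ, H1 h → Fprime p ρ ω v h = 0)
    (τ : E3) (r : E3 → ℝ) (hr : H1 r) (hperp : perpT0 Q r)
    (hdec : (fun x => v (x - τ)) = fun x => Q x + r x)
    (ε0 ε4 : ℝ) (hε0 : 0 < ε0) (hε4 : 0 < ε4)
    (hsmall : h1norm r < min ε0 ε4)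
    (P : (E3 → ℝ) → E3 → ℝ) (T : (E3 → ℝ) → E3)
    (hP : ∀ u : E3 → ℝ, H1 u → h1norm (fun x => u x - Q x) < ε0 →
      P u = transl Q (T u) ∧ perpTQ Q (T u) (fun x => u x - P u x))
    (hPuniq : ∀ u : E3 → ℝ, H1 u → h1norm (fun x => u x - Q x) < ε0 →
      ∀ σ : E3, perpTQ Q σ (fun x => u x - transl Q σ x) → transl Q σ = P u)
    (w : E3 → ℝ) (hwH1 : H1 w) (hwrad : IsRadial w)
    (hwsmall : h1norm (fun x => w x - Q x) < ε4) (hwP : P w = Q)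
    (hwcrit : ∀ h : E3 → ℝ, H1 h → perpT0 Q h → Fprime p ρ ω w h = 0)
    (hUniq : ∀ u₁ u₂ : E3 → ℝ,
      (H1 u₁ ∧ h1norm (fun x => u₁ x - Q x) < ε4 ∧ P u₁ = Q ∧
        ∀ h : E3 → ℝ, H1 h → perpT0 Q h → Fprime p ρ ω u₁ h = 0) →
      (H1 u₂ ∧ h1norm (fun x => u₂ x - Q x) < ε4 ∧ P u₂ = Q ∧
        ∀ h : E3 → ℝ, H1 h → perpT0 Q h → Fprime p ρ ω u₂ h = 0) →
      u₁ = u₂) :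
    P (fun x => v (x - τ)) = Q ∧
      (∀ h : E3 → ℝ, H1 h → perpT0 Q h →
        Fprime p ρ ω (fun x => v (x - τ)) h = 0) ∧
      (fun x => v (x - τ)) = w ∧ IsRadial (fun x => v (x - τ)) :=
  conclusion_radiality_general p ω ρ Q hQ v hcrit τ r hr hperp hdec ε0 ε4 hsmall P hPuniq w hwH1
    hwrad hwsmall hwP hwcrit hUniq
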